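/- Fix integers k ≥ 1, j ≥ 0 and s ≥ 0 with 2s ≤ k−1. Let A be the set of n = 3(k+2j+1)+1 distinct lines of the real projective plane consisting of: the line z = 0, and the lines x = c·z, y = c·z, and x + y = c·z for each integer −j ≤ c ≤ k+j (the arrangement A_{A2}^{[−j,k+j]}). Let L be any one of the three lines x = −(j+s+1)·z, y = −(j+s+1)·z, x + y = (k+j+s+1)·z, none of which belongs to A. Then the set of intersection points {L ∩ K : K ∈ A} has exactly k+3j+3+s elements. (Equivalently, t_{A ∪ {L}, L} = 2k+3j+1−s; by the splitting-type criterion this gives T_A|_L ≅ O_L(−2k−3j−1+s) ⊕ O_L(−k−3j−2−s).) -/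

import Mathlib

/-! The linear involutions `(x, y, z) ↦ (y, x, z)` and `(x, y, z) ↦ (x + y - kz, -y, -z)`
preserve the arrangement (they permute its three parallel classes) and carry the line
`x = -(j+s+1)z` to the other two candidate lines, so only that line needs to be treated.
It meets `z = 0` and every line `x = cz` in `(0 : 1 : 0)`, the line `y = cz` in
`(-(j+s+1) : c : 1)` and the line `x + y = cz` in `(-(j+s+1) : c+j+s+1 : 1)`. Since `s ≤ k + j`,
the second coordinates of the affine points fill the integer interval `[-j, k+2j+s+1]`. -/

noncomputable section

/-- The projective line `{a·x + b·y + c·z = 0}` regarded as the 2-dimensional subspace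
of `ℝ³` cut out by the linear form with coefficients `a, b, c`. -/
def lineL (a b c : ℝ) : Submodule ℝ (Fin 3 → ℝ) :=
  LinearMap.ker
    ((a • LinearMap.proj 0 + b • LinearMap.proj 1 + c • LinearMap.proj 2 :
      (Fin 3 → ℝ) →ₗ[ℝ] ℝ))

/-- The grid arrangement: the line at infinity `z = 0` together with the lines
`x = s·z` and `y = s·z` for integers `-j ≤ s ≤ k+j`. -/
def gridLines (k j : ℕ) : Set (Submodule ℝ (Fin 3 → ℝ)) :=
  {lineL 0 0 1} ∪
    {L | ∃ s : ℤ, -(j : ℤ) ≤ s ∧ s ≤ (k : ℤ) + j ∧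
      (L = lineL 1 0 (-(s : ℝ)) ∨ L = lineL 0 1 (-(s : ℝ)))}

/-- The full deformed `A2` arrangement `A_{A2}^{[-j, k+j]}`. -/
def arrA2 (k j : ℕ) : Set (Submodule ℝ (Fin 3 → ℝ)) :=
  gridLines k j ∪
    {L | ∃ c : ℤ, -(j : ℤ) ≤ c ∧ c ≤ (k : ℤ) + j ∧ L = lineL 1 1 (-(c : ℝ))}

open Matrix Function Submodule

section Lines

variable {a b c a' b' c' : ℝ}

lemma mem_lineL {v : Fin 3 → ℝ} : v ∈ lineL a b c ↔ a * v 0 + b * v 1 + c * v 2 = 0 := by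
  simp [lineL]

lemma mem_lineL_iff_dotProduct {v : Fin 3 → ℝ} : v ∈ lineL a b c ↔ ![a, b, c] ⬝ᵥ v = 0 := by
  rw [mem_lineL, vec3_dotProduct]; rfl

lemma lineL_neg : lineL (-a) (-b) (-c) = lineL a b c := by
  ext v
  simp only [mem_lineL]
  constructor <;> intro h <;> linarith

lemma cross_mem_lineL_left (w : Fin 3 → ℝ) : ![a, b, c] ⨯₃ w ∈ lineL a b c :=
  mem_lineL_iff_dotProduct.2 (dot_self_cross _ _)

lemma cross_eq_zero_of_lineL_eq (h : lineL a b c = lineL a' b' c') :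
    ![a, b, c] ⨯₃ ![a', b', c'] = 0 := by
  refine dotProduct_eq_zero _ fun w => ?_
  have hw := mem_lineL_iff_dotProduct.1 (h ▸ cross_mem_lineL_left (a := a) (b := b) (c := c) w)
  calc ![a, b, c] ⨯₃ ![a', b', c'] ⬝ᵥ w = -(w ⬝ᵥ ![a', b', c'] ⨯₃ ![a, b, c]) := by
        rw [← cross_anticomm, neg_dotProduct, dotProduct_comm]
    _ = 0 := by rw [← triple_product_permutation, ← triple_product_permutation, hw, neg_zero]

lemma lineL_inf_lineL (h : ![a, b, c] ⨯₃ ![a', b', c'] ≠ 0) :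
    lineL a b c ⊓ lineL a' b' c' = span ℝ {![a, b, c] ⨯₃ ![a', b', c']} := by
  apply le_antisymm
  · rintro w ⟨hw, hw'⟩
    have hcw : ![a, b, c] ⨯₃ ![a', b', c'] ⨯₃ w = 0 := by
      rw [cross_cross_eq_smul_sub_smul, mem_lineL_iff_dotProduct.1 hw,
        mem_lineL_iff_dotProduct.1 hw', zero_smul, zero_smul, sub_zero]
    have hdep : ¬LinearIndependent ℝ ![![a, b, c] ⨯₃ ![a', b', c'], w] :=
      fun hli => crossProduct_ne_zero_iff_linearIndependent.2 hli hcw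
    obtain ⟨r, hr⟩ := not_forall_not.1 (mt (LinearIndependent.pair_iff' h).2 hdep)
    exact mem_span_singleton.2 ⟨r, hr⟩
  · rw [span_singleton_le_iff_mem]
    exact ⟨cross_mem_lineL_left _, mem_lineL_iff_dotProduct.2 (dot_cross_self _ _)⟩

lemma lineL_inf_lineL_eq_span {v : Fin 3 → ℝ} (h : ![a, b, c] ⨯₃ ![a', b', c'] ≠ 0)
    (hv : v ≠ 0) (hvL : v ∈ lineL a b c) (hvK : v ∈ lineL a' b' c') :
    lineL a b c ⊓ lineL a' b' c' = span ℝ {v} := by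
  have hvn : v ∈ lineL a b c ⊓ lineL a' b' c' := ⟨hvL, hvK⟩
  rw [lineL_inf_lineL h] at hvn ⊢
  obtain ⟨r, rfl⟩ := mem_span_singleton.1 hvn
  rw [span_singleton_smul_eq (IsUnit.mk0 r (left_ne_zero_of_smul hv))]

end Lines

lemma span_singleton_injOn_apply_two_eq_one :
    Set.InjOn (fun v : Fin 3 → ℝ => span ℝ {v}) {v | v 2 = 1} := by
  intro v hv w hw h
  obtain ⟨z, rfl⟩ := span_singleton_eq_span_singleton.1 h
  have hz : z = 1 := Units.val_eq_one.1 (by simpa [Units.smul_def, hv.out] using hw.out)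
  rw [hz, one_smul]

lemma span_singleton_ne_of_apply_two_eq_zero {v w : Fin 3 → ℝ} (hv : v 2 = 0) (hw : w 2 ≠ 0) :
    span ℝ {v} ≠ span ℝ {w} := by
  intro h
  obtain ⟨z, rfl⟩ := span_singleton_eq_span_singleton.1 h
  simp [hv] at hw

section Arrangement

lemma mem_arrA2 {k j : ℕ} {K : Submodule ℝ (Fin 3 → ℝ)} :
    K ∈ arrA2 k j ↔ K = lineL 0 0 1 ∨
      ∃ c : ℤ, -(j : ℤ) ≤ c ∧ c ≤ (k : ℤ) + j ∧
        (K = lineL 1 0 (-(c : ℝ)) ∨ K = lineL 0 1 (-(c : ℝ)) ∨ K = lineL 1 1 (-(c : ℝ))) := by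
  simp only [arrA2, gridLines, Set.mem_union, Set.mem_singleton_iff, Set.mem_ofPred_eq]
  constructor
  · rintro ((h | ⟨c, h1, h2, h3 | h3⟩) | ⟨c, h1, h2, h3⟩)
    exacts [.inl h, .inr ⟨c, h1, h2, .inl h3⟩, .inr ⟨c, h1, h2, .inr (.inl h3)⟩,
      .inr ⟨c, h1, h2, .inr (.inr h3)⟩]
  · rintro (h | ⟨c, h1, h2, h3 | h3 | h3⟩)
    exacts [.inl (.inl h), .inl (.inr ⟨c, h1, h2, .inl h3⟩), .inl (.inr ⟨c, h1, h2, .inr h3⟩),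
      .inr ⟨c, h1, h2, h3⟩]

def parallelLine (p : Fin 3 × ℤ) : Submodule ℝ (Fin 3 → ℝ) :=
  lineL (![1, 0, 1] p.1) (![0, 1, 1] p.1) (-(p.2 : ℝ))

lemma parallelLine_injective : Injective parallelLine := by
  rintro ⟨i, c⟩ ⟨i', c'⟩ h
  replace h := cross_eq_zero_of_lineL_eq h
  fin_cases i <;> fin_cases i' <;>
    simp [cross_apply, neg_add_eq_zero, eq_comm (a := c')] at h ⊢ <;> exact h

lemma parallelLine_ne_lineL_zero_zero_one (i : Fin 3) (c : ℤ) :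
    parallelLine (i, c) ≠ lineL 0 0 1 := by
  intro h
  replace h := cross_eq_zero_of_lineL_eq h
  fin_cases i <;> simp [cross_apply] at h

lemma arrA2_eq_insert_image (k j : ℕ) :
    arrA2 k j =
      insert (lineL 0 0 1) (parallelLine '' (Set.univ ×ˢ Set.Icc (-(j : ℤ)) (k + j))) := by
  ext K
  simp [mem_arrA2, parallelLine, Fin.exists_fin_succ, and_or_left, exists_or, eq_comm (b := K),
    and_assoc]

lemma ncard_arrA2 (k j : ℕ) : (arrA2 k j).ncard = 3 * (k + 2 * j + 1) + 1 := by
  rw [arrA2_eq_insert_image,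
    Set.ncard_insert_of_notMem
      (by rintro ⟨⟨i, c⟩, -, h⟩; exact parallelLine_ne_lineL_zero_zero_one i c h),
    Set.ncard_image_of_injective _ parallelLine_injective, Set.ncard_prod, Set.ncard_univ,
    Nat.card_eq_fintype_card, Fintype.card_fin, Set.ncard_eq_toFinset_card', Set.toFinset_Icc,
    Int.card_Icc]
  omega

end Arrangement

section LineX

lemma lineX_inf_lineZ (t : ℝ) : lineL 1 0 t ⊓ lineL 0 0 1 = span ℝ {![0, 1, 0]} :=
  lineL_inf_lineL_eq_span (by simp [cross_apply]) (by simp) (by simp [mem_lineL])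
    (by simp [mem_lineL])

lemma lineX_inf_lineX {t b : ℝ} (h : t ≠ b) : lineL 1 0 t ⊓ lineL 1 0 b = span ℝ {![0, 1, 0]} :=
  lineL_inf_lineL_eq_span (by simp [cross_apply, sub_eq_zero, h]) (by simp) (by simp [mem_lineL])
    (by simp [mem_lineL])

lemma lineX_inf_lineY (t y : ℝ) : lineL 1 0 t ⊓ lineL 0 1 (-y) = span ℝ {![-t, y, 1]} :=
  lineL_inf_lineL_eq_span (by simp [cross_apply]) (by simp) (by simp [mem_lineL])
    (by simp [mem_lineL])

lemma lineX_inf_lineXY (t c : ℝ) : lineL 1 0 t ⊓ lineL 1 1 (-c) = span ℝ {![-t, t + c, 1]} :=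
  lineL_inf_lineL_eq_span (by simp [cross_apply]) (by simp) (by simp [mem_lineL])
    (by simp [mem_lineL])

variable {k j : ℕ} {t : ℤ}

lemma image_lineX_inf_arrA2 (ht : j < t) (htk : t ≤ k + 2 * j + 1) :
    (fun K => lineL 1 0 (t : ℝ) ⊓ K) '' arrA2 k j = insert (span ℝ {![0, 1, 0]})
      ((fun m : ℤ => span ℝ {![-(t : ℝ), m, 1]}) '' Set.Icc (-(j : ℤ)) (k + j + t)) := by
  ext P
  constructor
  · rintro ⟨K, hK, rfl⟩
    rcases mem_arrA2.1 hK with rfl | ⟨c, hc, hc', rfl | rfl | rfl⟩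
    · exact .inl (lineX_inf_lineZ _)
    · exact .inl (lineX_inf_lineX (by exact_mod_cast (by omega : t ≠ -c)))
    · exact .inr ⟨c, ⟨hc, by omega⟩, (lineX_inf_lineY _ _).symm⟩
    · refine .inr ⟨t + c, ⟨by omega, by omega⟩, ?_⟩
      simp only [lineX_inf_lineXY]
      push_cast
      rfl
  · rintro (rfl | ⟨m, ⟨hm, hm'⟩, rfl⟩)
    · exact ⟨_, mem_arrA2.2 (.inl rfl), lineX_inf_lineZ _⟩
    by_cases hmk : m ≤ k + j
    · exact ⟨_, mem_arrA2.2 (.inr ⟨m, hm, hmk, .inr (.inl rfl)⟩), lineX_inf_lineY _ _⟩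
    · refine ⟨_, mem_arrA2.2 (.inr ⟨m - t, by omega, by omega, .inr (.inr rfl)⟩), ?_⟩
      simp only [lineX_inf_lineXY]
      push_cast
      ring_nf

lemma ncard_image_lineX_inf_arrA2 (ht : j < t) (htk : t ≤ k + 2 * j + 1) :
    ((fun K => lineL 1 0 (t : ℝ) ⊓ K) '' arrA2 k j).ncard = (k + 2 * j + t + 2).toNat := by
  have hinj : Injective fun m : ℤ => span ℝ {![-(t : ℝ), m, 1]} := fun m m' h => by
    simpa using congrFun (span_singleton_injOn_apply_two_eq_one (by simp) (by simp) h) 1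
  rw [image_lineX_inf_arrA2 ht htk, Set.ncard_insert_of_notMem, Set.ncard_image_of_injective _ hinj,
    Set.ncard_eq_toFinset_card', Set.toFinset_Icc, Int.card_Icc]
  · omega
  · rintro ⟨m, -, h⟩
    exact span_singleton_ne_of_apply_two_eq_zero (by simp) (by simp) h.symm

lemma lineX_notMem_arrA2 (ht : j < t) : lineL 1 0 (t : ℝ) ∉ arrA2 k j := by
  intro h
  rcases mem_arrA2.1 h with h | ⟨c, hc, -, h | h | h⟩ <;> replace h := cross_eq_zero_of_lineL_eq h
  · simp [cross_apply] at h
  · have htc : ((t + c : ℤ) : ℝ) = 0 := by push_cast; simpa [cross_apply] using congrFun h 1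
    exact absurd (Int.cast_eq_zero.1 htc) (by omega)
  · simp [cross_apply] at h
  · simp [cross_apply] at h

end LineX

section Involution

variable {R M : Type*} [Semiring R] [AddCommMonoid M] [Module R M] {f : M →ₗ[R] M}

lemma Function.Involutive.comap_submodule (hf : Involutive f) : Involutive (comap f) := fun K => by
  rw [← comap_comp, show f ∘ₗ f = LinearMap.id from LinearMap.ext hf, comap_id]

variable {A : Set (Submodule R M)}

lemma comap_mem_iff_of_involutive (hf : Involutive f) (hA : Set.MapsTo (comap f) A A)
    {L : Submodule R M} : L.comap f ∈ A ↔ L ∈ A :=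
  ⟨fun h => hf.comap_submodule L ▸ hA h, fun h => hA h⟩

lemma ncard_image_comap_inf_of_involutive (hf : Involutive f) (hA : Set.MapsTo (comap f) A A)
    (L : Submodule R M) : ((L.comap f ⊓ ·) '' A).ncard = ((L ⊓ ·) '' A).ncard := by
  have hA' : comap f '' A = A :=
    hA.image_subset.antisymm fun K hK => ⟨K.comap f, hA hK, hf.comap_submodule K⟩
  have himage : (L.comap f ⊓ ·) '' A = comap f '' ((L ⊓ ·) '' A) := by
    nth_rewrite 1 [← hA']
    simp only [Set.image_image, comap_inf]
  rw [himage, Set.ncard_image_of_injective _ hf.comap_submodule.injective]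

end Involution

section Symmetries

def swapXY : (Fin 3 → ℝ) →ₗ[ℝ] (Fin 3 → ℝ) := toLin' !![0, 1, 0; 1, 0, 0; 0, 0, 1]

def reflectA2 (k : ℝ) : (Fin 3 → ℝ) →ₗ[ℝ] (Fin 3 → ℝ) := toLin' !![1, 1, -k; 0, -1, 0; 0, 0, -1]

lemma swapXY_apply (v : Fin 3 → ℝ) : swapXY v = ![v 1, v 0, v 2] := by
  ext i; fin_cases i <;> simp [swapXY, vecHead, vecTail]

lemma reflectA2_apply (k : ℝ) (v : Fin 3 → ℝ) :
    reflectA2 k v = ![v 0 + v 1 - k * v 2, -v 1, -v 2] := by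
  ext i; fin_cases i <;> simp [reflectA2, vecHead, vecTail, sub_eq_add_neg, add_assoc]

lemma swapXY_involutive : Involutive swapXY := fun v => by
  ext i; fin_cases i <;> simp [swapXY_apply]

lemma reflectA2_involutive (k : ℝ) : Involutive (reflectA2 k) := fun v => by
  ext i; fin_cases i <;> simp [reflectA2_apply]; ring

lemma comap_swapXY_lineL (a b c : ℝ) : (lineL a b c).comap swapXY = lineL b a c := by
  ext v
  simp only [mem_comap, mem_lineL, swapXY_apply, cons_val_zero, cons_val_one, cons_val_two,
    tail_cons, head_cons]
  rw [add_comm (a * v 1)]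

lemma comap_reflectA2_lineL (k a b c : ℝ) :
    (lineL a b c).comap (reflectA2 k) = lineL a (a - b) (-(k * a) - c) := by
  ext v
  simp only [mem_comap, mem_lineL, reflectA2_apply, cons_val_zero, cons_val_one, cons_val_two,
    tail_cons, head_cons]
  constructor <;> intro h <;> linarith

lemma mapsTo_comap_swapXY (k j : ℕ) : Set.MapsTo (comap swapXY) (arrA2 k j) (arrA2 k j) := by
  intro K hK
  rcases mem_arrA2.1 hK with rfl | ⟨c, hc, hc', rfl | rfl | rfl⟩ <;>
    simp only [comap_swapXY_lineL] <;> refine mem_arrA2.2 ?_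
  exacts [.inl rfl, .inr ⟨c, hc, hc', .inr (.inl rfl)⟩, .inr ⟨c, hc, hc', .inl rfl⟩,
    .inr ⟨c, hc, hc', .inr (.inr rfl)⟩]

lemma mapsTo_comap_reflectA2 (k j : ℕ) :
    Set.MapsTo (comap (reflectA2 k)) (arrA2 k j) (arrA2 k j) := by
  intro K hK
  rcases mem_arrA2.1 hK with rfl | ⟨c, hc, hc', rfl | rfl | rfl⟩ <;>
    simp only [comap_reflectA2_lineL] <;> refine mem_arrA2.2 ?_
  · refine .inl ?_
    rw [← lineL_neg]; congr 1 <;> ring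
  · refine .inr ⟨k - c, by omega, by omega, .inr (.inr ?_)⟩
    congr 1 <;> push_cast <;> ring
  · refine .inr ⟨c, hc, hc', .inr (.inl ?_)⟩
    rw [← lineL_neg]; congr 1 <;> ring
  · refine .inr ⟨k - c, by omega, by omega, .inl ?_⟩
    congr 1 <;> push_cast <;> ring

end Symmetries

theorem jumping_line_outside_arrangement_general (k j s : ℕ) (hs : 2 * s ≤ k - 1)
    (L : Submodule ℝ (Fin 3 → ℝ))
    (hL : L = lineL 1 0 ((j : ℝ) + s + 1) ∨ L = lineL 0 1 ((j : ℝ) + s + 1) ∨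
      L = lineL 1 1 (-((k : ℝ) + j + s + 1))) :
    (arrA2 k j).ncard = 3 * (k + 2 * j + 1) + 1 ∧
    L ∉ arrA2 k j ∧
    ((fun K => L ⊓ K) '' arrA2 k j).ncard = k + 3 * j + 3 + s := by
  set L₀ := lineL 1 0 ((j : ℝ) + s + 1)
  have base : L₀ ∉ arrA2 k j ∧ ((fun K => L₀ ⊓ K) '' arrA2 k j).ncard = k + 3 * j + 3 + s := by
    rw [show L₀ = lineL 1 0 ((j + s + 1 : ℤ) : ℝ) by push_cast; rfl,
      ncard_image_lineX_inf_arrA2 (by omega) (by omega)]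
    exact ⟨lineX_notMem_arrA2 (by omega), by omega⟩
  have transport : ∀ f : (Fin 3 → ℝ) →ₗ[ℝ] (Fin 3 → ℝ), Involutive f →
      Set.MapsTo (comap f) (arrA2 k j) (arrA2 k j) →
      L₀.comap f ∉ arrA2 k j ∧ ((L₀.comap f ⊓ ·) '' arrA2 k j).ncard = k + 3 * j + 3 + s :=
    fun f hf hA => ⟨(comap_mem_iff_of_involutive hf hA).not.2 base.1,
      (ncard_image_comap_inf_of_involutive hf hA L₀).trans base.2⟩
  refine ⟨ncard_arrA2 k j, ?_⟩
  rcases hL with rfl | rfl | rfl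
  · exact base
  · rw [← comap_swapXY_lineL]
    exact transport _ swapXY_involutive (mapsTo_comap_swapXY k j)
  · rw [show lineL 1 1 (-((k : ℝ) + j + s + 1)) = L₀.comap (reflectA2 k) by
      rw [comap_reflectA2_lineL]; congr 1 <;> ring]
    exact transport _ (reflectA2_involutive k) (mapsTo_comap_reflectA2 k j)

/-- For `0 ≤ 2s ≤ k-1` and `L` one of the lines `x = -(j+s+1)z`, `y = -(j+s+1)z`,
`x + y = (k+j+s+1)z`, which are not in the arrangement, the set of intersection points
of `L` with the lines of the arrangement has exactly `k+3j+3+s` elements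
(so `t_{A ∪ {L}, L} = 2k+3j+1-s`). -/
theorem jumping_line_outside_arrangement (k j s : ℕ) (hk : 1 ≤ k) (hs : 2 * s ≤ k - 1)
    (L : Submodule ℝ (Fin 3 → ℝ))
    (hL : L = lineL 1 0 ((j : ℝ) + s + 1) ∨ L = lineL 0 1 ((j : ℝ) + s + 1) ∨
      L = lineL 1 1 (-((k : ℝ) + j + s + 1))) :
    (arrA2 k j).ncard = 3 * (k + 2 * j + 1) + 1 ∧
    L ∉ arrA2 k j ∧
    ((fun K => L ⊓ K) '' arrA2 k j).ncard = k + 3 * j + 3 + s :=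
  jumping_line_outside_arrangement_general k j s hs L hL
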